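/- Let n ≥ 1 and let A be the Rees ring of the n-th Weyl algebra over ℂ. If w is an element of the degree-one subspace V of A (the ℂ-span of the images of the generators x_1, y_1, …, x_n, y_n, z) that commutes with every element of A, then w is a scalar multiple of z. -/

import Mathlib

/-- Index type for the generators of the Rees ring of the `n`-th Weyl algebra:
`some (i, false)` is `xᵢ`, `some (i, true)` is `yᵢ`, and `none` is `z`. -/
abbrev ReesGen (n : ℕ) : Type := Option (Fin n × Bool)

/-- The defining relations of the Rees ring of the `n`-th Weyl algebra:
`xᵢ yᵢ = yᵢ xᵢ + z²`, and all other pairs of generators commute. -/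
inductive ReesRel (n : ℕ) : FreeAlgebra ℂ (ReesGen n) → FreeAlgebra ℂ (ReesGen n) → Prop
  | weyl (i : Fin n) :
      ReesRel n (FreeAlgebra.ι ℂ (some (i, false)) * FreeAlgebra.ι ℂ (some (i, true)))
        (FreeAlgebra.ι ℂ (some (i, true)) * FreeAlgebra.ι ℂ (some (i, false)) +
          FreeAlgebra.ι ℂ (none : ReesGen n) * FreeAlgebra.ι ℂ (none : ReesGen n))
  | comm (a b : ReesGen n)
      (h : ∀ i : Fin n, ¬(a = some (i, false) ∧ b = some (i, true)))
      (h' : ∀ i : Fin n, ¬(a = some (i, true) ∧ b = some (i, false))) :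
      ReesRel n (FreeAlgebra.ι ℂ a * FreeAlgebra.ι ℂ b)
        (FreeAlgebra.ι ℂ b * FreeAlgebra.ι ℂ a)

/-- The Rees ring of the `n`-th Weyl algebra. -/
abbrev ReesWeyl (n : ℕ) : Type := RingQuot (ReesRel n)

/-- The generator `xᵢ` of the Rees ring of the `n`-th Weyl algebra. -/
noncomputable def reesX (n : ℕ) (i : Fin n) : ReesWeyl n :=
  RingQuot.mkAlgHom ℂ (ReesRel n) (FreeAlgebra.ι ℂ (some (i, false)))

/-- The generator `yᵢ` of the Rees ring of the `n`-th Weyl algebra. -/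
noncomputable def reesY (n : ℕ) (i : Fin n) : ReesWeyl n :=
  RingQuot.mkAlgHom ℂ (ReesRel n) (FreeAlgebra.ι ℂ (some (i, true)))

/-- The central generator `z` of the Rees ring of the `n`-th Weyl algebra. -/
noncomputable def reesZ (n : ℕ) : ReesWeyl n :=
  RingQuot.mkAlgHom ℂ (ReesRel n) (FreeAlgebra.ι ℂ (none : ReesGen n))

/-- The degree-one subspace `V` of the Rees ring: the span of the images of the
`2n+1` generators. -/
noncomputable def reesV (n : ℕ) : Submodule ℂ (ReesWeyl n) :=
  Submodule.span ℂ (Set.range fun g : ReesGen n =>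
    RingQuot.mkAlgHom ℂ (ReesRel n) (FreeAlgebra.ι ℂ g))

open MvPolynomial in
private lemma pd_comm {σ : Type*} [DecidableEq σ] (i j : σ) (p : MvPolynomial σ ℂ) :
    pderiv i (pderiv j p) = pderiv j (pderiv i p) := by
  induction p using MvPolynomial.induction_on with
  | C a => simp
  | add p q hp hq => simp [hp, hq]
  | mul_X p k hp =>
    rcases eq_or_ne j k with h1 | h1 <;> rcases eq_or_ne i k with h2 | h2
    · subst h1; subst h2
      simp only [pderiv_mul, map_add, hp, pderiv_X_self, mul_one]
    · subst h1
      simp only [pderiv_mul, map_add, hp, pderiv_X_self, pderiv_X_of_ne (Ne.symm h2),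
        mul_one, mul_zero, add_zero, zero_add, map_zero]
    · subst h2
      simp only [pderiv_mul, map_add, hp, pderiv_X_self, pderiv_X_of_ne (Ne.symm h1),
        mul_one, mul_zero, add_zero, zero_add, map_zero]
    · simp only [pderiv_mul, map_add, hp, pderiv_X_of_ne (Ne.symm h1),
        pderiv_X_of_ne (Ne.symm h2), mul_zero, add_zero, map_zero]

/-- A representation of the Rees ring on polynomials: `xᵢ ↦ ∂ᵢ`, `yᵢ ↦ (Xᵢ * ·)`, `z ↦ 1`. -/
noncomputable def reesRep (n : ℕ) : ReesGen n → Module.End ℂ (MvPolynomial (Fin n) ℂ)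
  | none => 1
  | some (i, false) => (MvPolynomial.pderiv i).toLinearMap
  | some (i, true) => LinearMap.mulLeft ℂ (MvPolynomial.X i)

open MvPolynomial in
noncomputable def reesRepHom (n : ℕ) :
    ReesWeyl n →ₐ[ℂ] Module.End ℂ (MvPolynomial (Fin n) ℂ) :=
  RingQuot.liftAlgHom ℂ ⟨FreeAlgebra.lift ℂ (reesRep n), by
    rintro x y (⟨i⟩ | ⟨a, b, h, h'⟩)
    · simp only [map_mul, map_add, FreeAlgebra.lift_ι_apply, reesRep]
      refine LinearMap.ext fun p => ?_
      simp [Module.End.mul_apply, pderiv_mul]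
    · simp only [map_mul, FreeAlgebra.lift_ι_apply]
      obtain _ | ⟨i, bi⟩ := a
      · simp [reesRep]
      obtain _ | ⟨j, bj⟩ := b
      · simp [reesRep]
      cases bi <;> cases bj
      · -- ∂ᵢ ∂ⱼ
        refine LinearMap.ext fun p => ?_
        simpa [reesRep, Module.End.mul_apply] using pd_comm i j p
      · -- a = xᵢ, b = yⱼ, with i ≠ j
        have hij : j ≠ i := by
          intro e; exact h i ⟨rfl, by rw [e]⟩
        refine LinearMap.ext fun p => ?_
        simp [reesRep, Module.End.mul_apply, pderiv_mul, pderiv_X_of_ne hij]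
      · -- a = yᵢ, b = xⱼ, with i ≠ j
        have hij : i ≠ j := by
          intro e; exact h' i ⟨rfl, by rw [e]⟩
        refine LinearMap.ext fun p => ?_
        simp [reesRep, Module.End.mul_apply, pderiv_mul, pderiv_X_of_ne hij]
      · -- multiplication operators commute
        refine LinearMap.ext fun p => ?_
        simp [reesRep, Module.End.mul_apply]; ring⟩

theorem stmt19 (n : ℕ) (hn : 1 ≤ n) (w : ReesWeyl n) (hw : w ∈ reesV n)
    (hcentral : ∀ a : ReesWeyl n, w * a = a * w) :
    ∃ c : ℂ, w = c • reesZ n := by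
  classical
  set gen : ReesGen n → ReesWeyl n :=
    fun g => RingQuot.mkAlgHom ℂ (ReesRel n) (FreeAlgebra.ι ℂ g) with hgen
  -- the defining relations, pushed to the quotient
  have weyl_rel : ∀ i : Fin n,
      gen (some (i, false)) * gen (some (i, true)) =
        gen (some (i, true)) * gen (some (i, false)) + gen none * gen none := by
    intro i
    have := RingQuot.mkAlgHom_rel ℂ (ReesRel.weyl (n := n) i)
    simpa [map_mul, map_add] using this
  have comm_rel : ∀ (a b : ReesGen n),
      (∀ i : Fin n, ¬(a = some (i, false) ∧ b = some (i, true))) →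
      (∀ i : Fin n, ¬(a = some (i, true) ∧ b = some (i, false))) →
      gen a * gen b = gen b * gen a := by
    intro a b h h'
    have := RingQuot.mkAlgHom_rel ℂ (ReesRel.comm a b h h')
    simpa [map_mul] using this
  -- evaluate the representation on generators
  have hrep : ∀ g : ReesGen n, reesRepHom n (gen g) = reesRep n g := by
    intro g
    rw [hgen]
    simp only [reesRepHom]
    rw [RingQuot.liftAlgHom_mkAlgHom_apply, FreeAlgebra.lift_ι_apply]
  have hone_ne : (1 : Module.End ℂ (MvPolynomial (Fin n) ℂ)) ≠ 0 := by
    intro hcontra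
    have := congrArg (fun f : Module.End ℂ (MvPolynomial (Fin n) ℂ) => f 1) hcontra
    simp at this
  -- z² is "nonzero" enough: c • z² = 0 forces c = 0
  have hz2 : ∀ c : ℂ, c • (gen none * gen none) = 0 → c = 0 := by
    intro c hc
    have := congrArg (reesRepHom n) hc
    rw [map_smul, map_mul, hrep, map_zero] at this
    simp only [reesRep, mul_one] at this
    rcases smul_eq_zero.mp this with h0 | h0
    · exact h0
    · exact absurd h0 hone_ne
  -- write w as a linear combination of the generators
  obtain ⟨c, hc⟩ := (Submodule.mem_span_range_iff_exists_fun ℂ).mp hw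
  -- coefficient of xⱼ vanishes
  have hx : ∀ j : Fin n, c (some (j, false)) = 0 := by
    intro j
    apply hz2
    have key : ∀ g : ReesGen n, g ≠ some (j, false) →
        gen g * gen (some (j, true)) = gen (some (j, true)) * gen g := by
      intro g hne
      apply comm_rel
      · rintro i ⟨rfl, h2⟩
        simp only [Option.some.injEq, Prod.mk.injEq] at h2
        exact hne (by rw [h2.1])
      · rintro i ⟨rfl, h2⟩
        simp at h2
    have expand : w * gen (some (j, true)) - gen (some (j, true)) * w =
        c (some (j, false)) • (gen none * gen none) := by
      rw [← hc, Finset.sum_mul, Finset.mul_sum, ← Finset.sum_sub_distrib]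
      rw [Finset.sum_eq_single (some (j, false))]
      · rw [smul_mul_assoc, mul_smul_comm, ← smul_sub, weyl_rel j]
        congr 1
        exact add_sub_cancel_left _ _
      · intro g _ hne
        rw [smul_mul_assoc, mul_smul_comm, key g hne, sub_self]
      · intro habs; exact absurd (Finset.mem_univ _) habs
    rw [hcentral (gen (some (j, true))), sub_self] at expand
    exact expand.symm
  -- coefficient of yⱼ vanishes
  have hy : ∀ j : Fin n, c (some (j, true)) = 0 := by
    intro j
    apply hz2
    have key : ∀ g : ReesGen n, g ≠ some (j, true) →
        gen (some (j, false)) * gen g = gen g * gen (some (j, false)) := by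
      intro g hne
      apply comm_rel
      · rintro i ⟨h1, rfl⟩
        simp only [Option.some.injEq, Prod.mk.injEq] at h1
        exact hne (by rw [h1.1])
      · rintro i ⟨h1, h2⟩
        simp at h1
    have expand : gen (some (j, false)) * w - w * gen (some (j, false)) =
        c (some (j, true)) • (gen none * gen none) := by
      rw [← hc, Finset.sum_mul, Finset.mul_sum, ← Finset.sum_sub_distrib]
      rw [Finset.sum_eq_single (some (j, true))]
      · rw [smul_mul_assoc, mul_smul_comm, ← smul_sub, weyl_rel j]
        congr 1
        exact add_sub_cancel_left _ _
      · intro g _ hne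
        rw [smul_mul_assoc, mul_smul_comm, key g hne, sub_self]
      · intro habs; exact absurd (Finset.mem_univ _) habs
    rw [← hcentral (gen (some (j, false))), sub_self] at expand
    exact expand.symm
  -- conclude
  refine ⟨c none, ?_⟩
  have : w = ∑ g : ReesGen n, c g • gen g := hc.symm
  rw [this, Fintype.sum_option]
  have hzero : ∀ p : Fin n × Bool, c (some p) • gen (some p) = 0 := by
    rintro ⟨i, b⟩
    cases b
    · rw [hx i, zero_smul]
    · rw [hy i, zero_smul]
  rw [Finset.sum_eq_zero fun p _ => hzero p, add_zero]
  rfl
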